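/- Let p ≥ 2 and let f : ℝ^d → ℝ be convex, differentiable, and L-smooth w.r.t. ‖·‖_p, and let (x_t), (y_t), (v_t), (a_t), (A_t), (ρ_t), (ψ_t) be HASD iterates started at x_0 ∈ ℝ^d. Then for every t ≥ 0, A_t f(x_t) + B_t ≤ min_{x ∈ ℝ^d} ψ_t(x). -/

import Mathlib

open scoped BigOperators
open scoped InnerProductSpace

/-- The `ℓ_p` "norm" on `ℝ^d` for a real exponent `p`. -/
noncomputable def pnorm (p : ℝ) {d : ℕ} (x : EuclideanSpace ℝ (Fin d)) : ℝ :=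
  (∑ i, |x i| ^ p) ^ (1 / p)

/-- The dual exponent `p* = p/(p-1)`, so that `1/p + 1/p* = 1`. -/
noncomputable def dualExp (p : ℝ) : ℝ := p / (p - 1)

/-- The iterates of the Hyper-Accelerated Steepest Descent (HASD) method for
`f : ℝ^d → ℝ` differentiable, smoothness constant `L > 0`, started at `x0`. -/
structure HASD (d : ℕ) (p L : ℝ) (f : EuclideanSpace ℝ (Fin d) → ℝ)
    (x0 : EuclideanSpace ℝ (Fin d)) where
  x : ℕ → EuclideanSpace ℝ (Fin d)
  y : ℕ → EuclideanSpace ℝ (Fin d)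
  v : ℕ → EuclideanSpace ℝ (Fin d)
  a : ℕ → ℝ
  A : ℕ → ℝ
  ρ : ℕ → ℝ
  ψ : ℕ → EuclideanSpace ℝ (Fin d) → ℝ
  x_zero : x 0 = x0
  A_zero : A 0 = 0
  ψ_zero : ∀ z, ψ 0 z = (1 / 2) * pnorm 2 (z - x0) ^ 2
  /-- `v t` minimizes `ψ t` over `ℝ^d`. -/
  v_min : ∀ t z, ψ t (v t) ≤ ψ t z
  grad_ne : ∀ t : ℕ, gradient f (x (t + 1)) ≠ 0
  ρ_pos : ∀ t : ℕ, 0 < ρ t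
  ρ_lb : ∀ t : ℕ, (1 / 2) * (pnorm 2 (gradient f (x (t + 1))) ^ 2 /
      pnorm (dualExp p) (gradient f (x (t + 1))) ^ 2) ≤ ρ t
  ρ_ub : ∀ t : ℕ, ρ t ≤ 2 * (pnorm 2 (gradient f (x (t + 1))) ^ 2 /
      pnorm (dualExp p) (gradient f (x (t + 1))) ^ 2)
  a_pos : ∀ t : ℕ, 0 < a (t + 1)
  a_eq : ∀ t : ℕ, a (t + 1) ^ 2 = (A t + a (t + 1)) / (18 * L * ρ t)
  A_succ : ∀ t : ℕ, A (t + 1) = A t + a (t + 1)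
  y_def : ∀ t : ℕ, y t = (1 - a (t + 1) / A (t + 1)) • x t + (a (t + 1) / A (t + 1)) • v t
  /-- `x (t+1)` minimizes `z ↦ ⟪∇f(y t), z - y t⟫ + L ‖z - y t‖_p²` over `ℝ^d`. -/
  x_min : ∀ (t : ℕ) (z : EuclideanSpace ℝ (Fin d)),
      ⟪gradient f (y t), x (t + 1) - y t⟫_ℝ + L * pnorm p (x (t + 1) - y t) ^ 2 ≤
      ⟪gradient f (y t), z - y t⟫_ℝ + L * pnorm p (z - y t) ^ 2
  ψ_succ : ∀ (t : ℕ) (z : EuclideanSpace ℝ (Fin d)),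
      ψ (t + 1) z = ψ t z + a (t + 1) * (f (x (t + 1)) + ⟪gradient f (x (t + 1)), z - x (t + 1)⟫_ℝ)

/-!
Induction on `t`. Since `ψ t` is `½‖· - x0‖²` plus affine functions, completing the square gives
`ψ t z = ψ t (v t) + ½‖z - v t‖²` and, with `g = ∇f(x (t+1))` and `a = a (t+1)`,
`ψ (t+1) (v (t+1)) = ψ t (v t) + a (f (x (t+1)) + ⟪g, v t - x (t+1)⟫) - ½ a² ‖g‖²`.
Convexity of `f` at `x t` and `A (t+1) y t = A t x t + a v t` turn the linear terms into
`A (t+1) ⟪g, y t - x (t+1)⟫`. The `ℓ_p` steepest descent step from `y t` has length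
`‖∇f(y t)‖_{p*} / (2L)`, so by `L`-smoothness `⟪g, y t - x (t+1)⟫ ≥ ‖g‖_{p*}² / (9L)`, and the
choice of `ρ t` and `a` bounds the loss `½ a² ‖g‖²` by half of `A (t+1) ‖g‖_{p*}² / (9L)`.
-/

open Set

theorem ConvexOn.apply_add_le_of_hasFDerivAt {E : Type*} [NormedAddCommGroup E]
    [NormedSpace ℝ E] {f : E → ℝ} {f' : E →L[ℝ] ℝ} {x : E} (hf : ConvexOn ℝ univ f)
    (hx : HasFDerivAt f f' x) (y : E) : f x + f' (y - x) ≤ f y := by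
  have hline : HasDerivAt (f ∘ AffineMap.lineMap (k := ℝ) x y) (f' (y - x)) 0 := by
    refine HasFDerivAt.comp_hasDerivAt (0 : ℝ) ?_ AffineMap.hasDerivAt_lineMap
    rwa [AffineMap.lineMap_apply_zero]
  have hslope := (hf.comp_affineMap (AffineMap.lineMap (k := ℝ) x y)).le_slope_of_hasDerivAt
    (mem_univ 0) (mem_univ 1) zero_lt_one hline
  simp only [slope_def_field, Function.comp_apply, AffineMap.lineMap_apply_zero,
    AffineMap.lineMap_apply_one, sub_zero, div_one] at hslope
  linarith

theorem ConvexOn.apply_add_inner_gradient_le {E : Type*} [NormedAddCommGroup E]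
    [InnerProductSpace ℝ E] [CompleteSpace E] {f : E → ℝ} {x : E} (hf : ConvexOn ℝ univ f)
    (hx : DifferentiableAt ℝ f x) (y : E) : f x + ⟪gradient f x, y - x⟫_ℝ ≤ f y :=
  hf.apply_add_le_of_hasFDerivAt hx.hasGradientAt.hasFDerivAt y

theorem half_sq_norm_sub_add_inner {E : Type*} [NormedAddCommGroup E] [InnerProductSpace ℝ E]
    (v g x z : E) (a : ℝ) :
    1 / 2 * ‖z - v‖ ^ 2 + a * ⟪g, z - x⟫_ℝ =
      a * ⟪g, v - x⟫_ℝ - 1 / 2 * a ^ 2 * ‖g‖ ^ 2 + 1 / 2 * ‖z - (v - a • g)‖ ^ 2 := by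
  rw [show z - (v - a • g) = (z - v) + a • g by abel, norm_add_sq_real, norm_smul,
    real_inner_smul_right, Real.norm_eq_abs, mul_pow, sq_abs,
    show z - x = (z - v) + (v - x) by abel, inner_add_right, real_inner_comm g]
  ring

theorem eq_and_apply_eq_of_forall_eq_add_half_sq {E : Type*} [NormedAddCommGroup E]
    {φ : E → ℝ} {m : ℝ} {w v : E} (hφ : ∀ z, φ z = m + 1 / 2 * ‖z - w‖ ^ 2)
    (hv : ∀ z, φ v ≤ φ z) : v = w ∧ φ v = m := by
  have hvw : ‖v - w‖ ^ 2 ≤ 0 := by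
    have := hv w
    rw [hφ v, hφ w, sub_self, norm_zero] at this
    linarith
  have hv_eq : v = w := sub_eq_zero.mp (norm_eq_zero.mp (pow_eq_zero_iff two_ne_zero |>.mp
    (le_antisymm hvw (sq_nonneg _))))
  refine ⟨hv_eq, ?_⟩
  rw [hφ v, hv_eq, sub_self, norm_zero]
  ring

section pnorm

variable {d : ℕ}

theorem holderConjugate_dualExp {p : ℝ} (hp : 1 < p) : p.HolderConjugate (dualExp p) :=
  Real.HolderConjugate.conjExponent hp

theorem pnorm_nonneg (p : ℝ) (x : EuclideanSpace ℝ (Fin d)) : 0 ≤ pnorm p x := by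
  unfold pnorm
  positivity

theorem pnorm_zero {p : ℝ} (hp : 0 < p) : pnorm p (0 : EuclideanSpace ℝ (Fin d)) = 0 := by
  simp [pnorm, Real.zero_rpow hp.ne', Real.zero_rpow (inv_ne_zero hp.ne')]

theorem pnorm_pos (p : ℝ) {x : EuclideanSpace ℝ (Fin d)} (hx : x ≠ 0) :
    0 < pnorm p x := by
  obtain ⟨i, hi⟩ : ∃ i, x i ≠ 0 := by
    by_contra! hc
    exact hx (by ext i; exact hc i)
  have hsum : 0 < ∑ j, |x j| ^ p :=
    (Real.rpow_pos_of_pos (abs_pos.mpr hi) p).trans_le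
      (Finset.single_le_sum (f := fun j => |x j| ^ p) (fun j _ => by positivity)
        (Finset.mem_univ i))
  exact Real.rpow_pos_of_pos hsum _

theorem pnorm_two (x : EuclideanSpace ℝ (Fin d)) : pnorm 2 x = ‖x‖ := by
  rw [pnorm, EuclideanSpace.norm_eq, Real.sqrt_eq_rpow]
  norm_num

theorem pnorm_smul {p : ℝ} (hp : 0 < p) (c : ℝ) (x : EuclideanSpace ℝ (Fin d)) :
    pnorm p (c • x) = |c| * pnorm p x := by
  simp only [pnorm, PiLp.smul_apply, smul_eq_mul, abs_mul,
    Real.mul_rpow (abs_nonneg c) (abs_nonneg _), ← Finset.mul_sum]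
  rw [Real.mul_rpow (by positivity) (by positivity), ← Real.rpow_mul (abs_nonneg c),
    mul_one_div_cancel hp.ne', Real.rpow_one]

theorem pnorm_neg (p : ℝ) (x : EuclideanSpace ℝ (Fin d)) : pnorm p (-x) = pnorm p x := by
  simp [pnorm]

theorem pnorm_add_le {p : ℝ} (hp : 1 ≤ p) (x y : EuclideanSpace ℝ (Fin d)) :
    pnorm p (x + y) ≤ pnorm p x + pnorm p y :=
  Real.Lp_add_le Finset.univ (fun i => x i) (fun i => y i) hp

theorem inner_le_pnorm_dualExp_mul_pnorm {p : ℝ} (hp : 1 < p) (s x : EuclideanSpace ℝ (Fin d)) :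
    ⟪s, x⟫_ℝ ≤ pnorm (dualExp p) s * pnorm p x :=
  calc ⟪s, x⟫_ℝ = ∑ i, s i * x i := by simp [PiLp.inner_apply, mul_comm]
    _ ≤ _ := Real.inner_le_Lp_mul_Lq Finset.univ (fun i => s i) (fun i => x i)
      (holderConjugate_dualExp hp).symm

theorem exists_pnorm_eq_one_inner_eq {p : ℝ} (hp : 1 < p) {s : EuclideanSpace ℝ (Fin d)}
    (hs : s ≠ 0) : ∃ x, pnorm p x = 1 ∧ ⟪s, x⟫_ℝ = pnorm (dualExp p) s := by
  set q := dualExp p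
  have hpq : p.HolderConjugate q := holderConjugate_dualExp hp
  have hC : 0 < pnorm q s := pnorm_pos q hs
  set r : Fin d → ℝ := fun i => |s i| / pnorm q s
  have hr0 : ∀ i, 0 ≤ r i := fun i => div_nonneg (abs_nonneg _) hC.le
  have hr : ∑ i, r i ^ q = 1 := by
    simp only [r, Real.div_rpow (abs_nonneg _) hC.le, ← Finset.sum_div]
    rw [div_eq_one_iff_eq (by positivity), pnorm, ← Real.rpow_mul (by positivity),
      one_div_mul_cancel hpq.symm.ne_zero, Real.rpow_one]
  refine ⟨WithLp.toLp 2 fun i => SignType.sign (s i) * r i ^ (q - 1), ?_, ?_⟩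
  · have hterm : ∀ i, |SignType.sign (s i) * r i ^ (q - 1)| ^ p = r i ^ q := by
      intro i
      rcases eq_or_ne (s i) 0 with h0 | h0
      · simp [r, h0, Real.zero_rpow hpq.ne_zero, Real.zero_rpow hpq.symm.ne_zero]
      · have hsign : |(SignType.sign (s i) : ℝ)| = 1 := by
          rcases h0.lt_or_gt with h | h <;> simp [h]
        rw [abs_mul, hsign, one_mul, abs_of_nonneg (Real.rpow_nonneg (hr0 i) _),
          ← Real.rpow_mul (hr0 i), hpq.symm.sub_one_mul_conj]
    simp only [pnorm, hterm, hr, Real.one_rpow]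
  · have hterm : ∀ i, s i * (SignType.sign (s i) * r i ^ (q - 1)) = pnorm q s * r i ^ q := by
      intro i
      have habs : |s i| = pnorm q s * r i := (mul_div_cancel₀ _ hC.ne').symm
      rw [← mul_assoc, self_mul_sign, habs, mul_assoc, ← Real.rpow_one_add' (hr0 i)
        (by linarith [hpq.symm.pos]), add_sub_cancel]
    simp only [PiLp.inner_apply, RCLike.inner_apply, conj_trivial]
    simp only [mul_comm _ (s _), hterm, ← Finset.mul_sum, hr, mul_one]

end pnorm

section steepestDescent

variable {d : ℕ} {p L : ℝ}

theorem exists_inner_add_mul_sq_pnorm_le (hp : 1 < p) (hL : 0 < L)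
    (s : EuclideanSpace ℝ (Fin d)) :
    ∃ z, ⟪s, z⟫_ℝ + L * pnorm p z ^ 2 ≤ -(pnorm (dualExp p) s ^ 2 / (4 * L)) := by
  have hp0 : 0 < p := one_pos.trans hp
  rcases eq_or_ne s 0 with rfl | hs
  · exact ⟨0, by simp [pnorm_zero hp0, pnorm_zero (holderConjugate_dualExp hp).symm.pos]⟩
  obtain ⟨w, hw_norm, hw_inner⟩ := exists_pnorm_eq_one_inner_eq hp hs
  set S := pnorm (dualExp p) s
  have hS : 0 ≤ S := pnorm_nonneg _ _
  refine ⟨-(S / (2 * L)) • w, le_of_eq ?_⟩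
  rw [pnorm_smul hp0, hw_norm, abs_neg, abs_of_nonneg (by positivity), inner_smul_right,
    hw_inner]
  field_simp
  ring

theorem two_mul_pnorm_eq_and_inner_le_of_isMin (hp : 1 < p) (hL : 0 < L)
    {s u : EuclideanSpace ℝ (Fin d)}
    (hmin : ∀ z, ⟪s, u⟫_ℝ + L * pnorm p u ^ 2 ≤ ⟪s, z⟫_ℝ + L * pnorm p z ^ 2) :
    2 * L * pnorm p u = pnorm (dualExp p) s ∧
      ⟪s, u⟫_ℝ ≤ -(pnorm (dualExp p) s ^ 2 / (2 * L)) := by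
  set S := pnorm (dualExp p) s
  set U := pnorm p u
  obtain ⟨z, hz⟩ := exists_inner_add_mul_sq_pnorm_le hp hL s
  have hval : ⟪s, u⟫_ℝ + L * U ^ 2 ≤ -(S ^ 2 / (4 * L)) := (hmin z).trans hz
  have hholder : -(S * U) ≤ ⟪s, u⟫_ℝ := by
    have := inner_le_pnorm_dualExp_mul_pnorm hp s (-u)
    rwa [pnorm_neg, inner_neg_right, neg_le] at this
  -- the minimal value `-S²/(4L)` is attained, while Hölder bounds the value at `u` below by
  -- `L U² - S U`; together they force `(2LU - S)² ≤ 0`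
  have hsq : (2 * L * U - S) ^ 2 ≤ 0 := by
    have : (2 * L * U - S) ^ 2 = 4 * L * (L * U ^ 2 - S * U + S ^ 2 / (4 * L)) := by
      field_simp
      ring
    rw [this]
    exact mul_nonpos_of_nonneg_of_nonpos (by positivity) (by linarith)
  have hU : 2 * L * U = S := by nlinarith [sq_nonneg (2 * L * U - S)]
  refine ⟨hU, ?_⟩
  have : L * U ^ 2 = S ^ 2 / (4 * L) := by
    rw [← hU]
    field_simp
    ring
  have : S ^ 2 / (2 * L) = 2 * (S ^ 2 / (4 * L)) := by ring
  linarith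

theorem sq_pnorm_div_le_neg_inner_of_isMin (hp : 1 < p) (hL : 0 < L)
    {s g u : EuclideanSpace ℝ (Fin d)}
    (hmin : ∀ z, ⟪s, u⟫_ℝ + L * pnorm p u ^ 2 ≤ ⟪s, z⟫_ℝ + L * pnorm p z ^ 2)
    (hgs : pnorm (dualExp p) (g - s) ≤ L * pnorm p u) :
    pnorm (dualExp p) g ^ 2 / (9 * L) ≤ -⟪g, u⟫_ℝ := by
  obtain ⟨hU, hsu⟩ := two_mul_pnorm_eq_and_inner_le_of_isMin hp hL hmin
  set S := pnorm (dualExp p) s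
  set U := pnorm p u
  have hG : pnorm (dualExp p) g ≤ 3 / 2 * S := by
    have := pnorm_add_le (holderConjugate_dualExp hp).symm.lt.le s (g - s)
    rw [add_sub_cancel] at this
    linarith
  have hgsu : ⟪g - s, u⟫_ℝ ≤ L * U ^ 2 :=
    calc ⟪g - s, u⟫_ℝ ≤ pnorm (dualExp p) (g - s) * U := inner_le_pnorm_dualExp_mul_pnorm hp _ _
      _ ≤ L * U * U := mul_le_mul_of_nonneg_right hgs (pnorm_nonneg _ _)
      _ = L * U ^ 2 := by ring
  have hgu : ⟪g, u⟫_ℝ ≤ -(S ^ 2 / (4 * L)) := by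
    have hLU : L * U ^ 2 = S ^ 2 / (4 * L) := by
      rw [← hU]
      field_simp
      ring
    rw [inner_sub_left] at hgsu
    have : S ^ 2 / (2 * L) = 2 * (S ^ 2 / (4 * L)) := by ring
    linarith
  have hG2 : pnorm (dualExp p) g ^ 2 ≤ 9 / 4 * S ^ 2 := by
    nlinarith [pnorm_nonneg (dualExp p) g]
  have : pnorm (dualExp p) g ^ 2 / (9 * L) ≤ S ^ 2 / (4 * L) := by
    rw [div_le_div_iff₀ (by positivity) (by positivity)]
    nlinarith
  linarith

end steepestDescent

namespace HASD

variable {d : ℕ} {p L : ℝ} {f : EuclideanSpace ℝ (Fin d) → ℝ} {x0 : EuclideanSpace ℝ (Fin d)}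
  (h : HASD d p L f x0)
include h

theorem A_nonneg (t : ℕ) : 0 ≤ h.A t := by
  induction t with
  | zero => exact h.A_zero.ge
  | succ t ih => rw [h.A_succ t]; linarith [h.a_pos t]

theorem A_succ_pos (t : ℕ) : 0 < h.A (t + 1) := by
  rw [h.A_succ t]
  linarith [h.A_nonneg t, h.a_pos t]

theorem A_succ_smul_y (t : ℕ) : h.A (t + 1) • h.y t = h.A t • h.x t + h.a (t + 1) • h.v t := by
  have hA := (h.A_succ_pos t).ne'
  rw [h.y_def t, smul_add, smul_smul, smul_smul, mul_div_cancel₀ _ hA, mul_sub, mul_one,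
    mul_div_cancel₀ _ hA, h.A_succ t, add_sub_cancel_right]

theorem ψ_succ_eq_of_forall_eq (t : ℕ) {m : ℝ}
    (hψ : ∀ z, h.ψ t z = m + 1 / 2 * ‖z - h.v t‖ ^ 2) (z : EuclideanSpace ℝ (Fin d)) :
    h.ψ (t + 1) z = m + h.a (t + 1) * (f (h.x (t + 1)) +
        ⟪gradient f (h.x (t + 1)), h.v t - h.x (t + 1)⟫_ℝ) -
        1 / 2 * h.a (t + 1) ^ 2 * ‖gradient f (h.x (t + 1))‖ ^ 2 +
      1 / 2 * ‖z - (h.v t - h.a (t + 1) • gradient f (h.x (t + 1)))‖ ^ 2 := by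
  rw [h.ψ_succ, hψ]
  linear_combination half_sq_norm_sub_add_inner (h.v t) (gradient f (h.x (t + 1))) (h.x (t + 1))
    z (h.a (t + 1))

theorem ψ_eq_add_half_sq (t : ℕ) (z : EuclideanSpace ℝ (Fin d)) :
    h.ψ t z = h.ψ t (h.v t) + 1 / 2 * ‖z - h.v t‖ ^ 2 := by
  induction t generalizing z with
  | zero =>
    have hψ : ∀ z, h.ψ 0 z = 0 + 1 / 2 * ‖z - x0‖ ^ 2 := fun z => by
      rw [h.ψ_zero, pnorm_two, zero_add]
    obtain ⟨hv, hm⟩ := eq_and_apply_eq_of_forall_eq_add_half_sq hψ (h.v_min 0)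
    rw [hψ, hm, hv]
  | succ t ih =>
    have hψ := h.ψ_succ_eq_of_forall_eq t ih
    obtain ⟨hv, hm⟩ := eq_and_apply_eq_of_forall_eq_add_half_sq hψ (h.v_min (t + 1))
    rw [hψ, hm, hv]

theorem ψ_succ_v_succ (t : ℕ) :
    h.ψ (t + 1) (h.v (t + 1)) = h.ψ t (h.v t) + h.a (t + 1) * (f (h.x (t + 1)) +
        ⟪gradient f (h.x (t + 1)), h.v t - h.x (t + 1)⟫_ℝ) -
        1 / 2 * h.a (t + 1) ^ 2 * ‖gradient f (h.x (t + 1))‖ ^ 2 :=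
  (eq_and_apply_eq_of_forall_eq_add_half_sq (h.ψ_succ_eq_of_forall_eq t (h.ψ_eq_add_half_sq t))
    (h.v_min (t + 1))).2

theorem half_mul_sq_a_mul_sq_norm_le (hL : L ≠ 0) (t : ℕ) :
    1 / 2 * h.a (t + 1) ^ 2 * ‖gradient f (h.x (t + 1))‖ ^ 2 ≤
      1 / (18 * L) * (h.A (t + 1) * pnorm (dualExp p) (gradient f (h.x (t + 1))) ^ 2) := by
  set g := gradient f (h.x (t + 1))
  have hG : 0 < pnorm (dualExp p) g ^ 2 :=
    pow_pos (pnorm_pos _ (h.grad_ne t)) 2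
  have hρ : 1 / 2 * ‖g‖ ^ 2 ≤ h.ρ t * pnorm (dualExp p) g ^ 2 := by
    have := h.ρ_lb t
    rwa [pnorm_two, ← mul_div_assoc, div_le_iff₀ hG] at this
  have hA : h.A (t + 1) = 18 * L * h.ρ t * h.a (t + 1) ^ 2 := by
    rw [h.a_eq t, ← h.A_succ t,
      mul_div_cancel₀ _ (mul_ne_zero (mul_ne_zero (by norm_num) hL) (h.ρ_pos t).ne')]
  calc 1 / 2 * h.a (t + 1) ^ 2 * ‖g‖ ^ 2 = h.a (t + 1) ^ 2 * (1 / 2 * ‖g‖ ^ 2) := by ring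
    _ ≤ h.a (t + 1) ^ 2 * (h.ρ t * pnorm (dualExp p) g ^ 2) := by gcongr
    _ = 1 / (18 * L) * (h.A (t + 1) * pnorm (dualExp p) g ^ 2) := by
      rw [hA]
      field_simp

theorem sq_pnorm_grad_div_le_inner (hp : 1 < p) (hL : 0 < L)
    (hsmooth : ∀ x y : EuclideanSpace ℝ (Fin d),
      pnorm (dualExp p) (gradient f y - gradient f x) ≤ L * pnorm p (y - x)) (t : ℕ) :
    pnorm (dualExp p) (gradient f (h.x (t + 1))) ^ 2 / (9 * L) ≤
      ⟪gradient f (h.x (t + 1)), h.y t - h.x (t + 1)⟫_ℝ := by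
  have hmin : ∀ z, ⟪gradient f (h.y t), h.x (t + 1) - h.y t⟫_ℝ +
      L * pnorm p (h.x (t + 1) - h.y t) ^ 2 ≤
      ⟪gradient f (h.y t), z⟫_ℝ + L * pnorm p z ^ 2 := fun z => by
    simpa using h.x_min t (h.y t + z)
  have := sq_pnorm_div_le_neg_inner_of_isMin hp hL hmin (hsmooth _ _)
  rwa [← inner_neg_right, neg_sub] at this

theorem A_mul_sub_add_le_ψ_sub (hp : 1 < p) (hL : 0 < L)
    (hconv : ConvexOn ℝ univ f) (hf : Differentiable ℝ f)
    (hsmooth : ∀ x y : EuclideanSpace ℝ (Fin d),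
      pnorm (dualExp p) (gradient f y - gradient f x) ≤ L * pnorm p (y - x)) (t : ℕ) :
    h.A (t + 1) * f (h.x (t + 1)) - h.A t * f (h.x t) +
        1 / (18 * L) * (h.A (t + 1) * pnorm (dualExp p) (gradient f (h.x (t + 1))) ^ 2) ≤
      h.ψ (t + 1) (h.v (t + 1)) - h.ψ t (h.v t) := by
  set x' := h.x (t + 1)
  set g := gradient f x'
  set a := h.a (t + 1)
  have hconvex : h.A t * (f x' + ⟪g, h.x t - x'⟫_ℝ) ≤ h.A t * f (h.x t) :=
    mul_le_mul_of_nonneg_left (hconv.apply_add_inner_gradient_le (hf x') _) (h.A_nonneg t)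
  have hy : h.A t * ⟪g, h.x t - x'⟫_ℝ + a * ⟪g, h.v t - x'⟫_ℝ =
      h.A (t + 1) * ⟪g, h.y t - x'⟫_ℝ := by
    have : h.A t • (h.x t - x') + a • (h.v t - x') = h.A (t + 1) • (h.y t - x') := by
      rw [smul_sub, smul_sub, smul_sub, h.A_succ_smul_y, h.A_succ t, add_smul]
      abel
    rw [← real_inner_smul_right, ← real_inner_smul_right, ← inner_add_right, this,
      real_inner_smul_right]
  have hdescent := mul_le_mul_of_nonneg_left (h.sq_pnorm_grad_div_le_inner hp hL hsmooth t)
    (h.A_succ_pos t).le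
  have hρ := h.half_mul_sq_a_mul_sq_norm_le hL.ne' t
  have hψ := h.ψ_succ_v_succ t
  have hA : h.A (t + 1) * f x' = h.A t * f x' + a * f x' := by rw [h.A_succ t]; ring
  have hhalf : h.A (t + 1) * (pnorm (dualExp p) g ^ 2 / (9 * L)) =
      2 * (1 / (18 * L) * (h.A (t + 1) * pnorm (dualExp p) g ^ 2)) := by ring
  linarith

end HASD

theorem stmt3 {d : ℕ} (p L : ℝ) (hp : 2 ≤ p) (hL : 0 < L)
    (f : EuclideanSpace ℝ (Fin d) → ℝ) (hconv : ConvexOn ℝ Set.univ f)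
    (hf : Differentiable ℝ f)
    (hsmooth : ∀ x y : EuclideanSpace ℝ (Fin d),
      pnorm (dualExp p) (gradient f y - gradient f x) ≤ L * pnorm p (y - x))
    (x0 : EuclideanSpace ℝ (Fin d)) (h : HASD d p L f x0) :
    ∀ t : ℕ,
      h.A t * f (h.x t) +
        (1 / (18 * L)) * ∑ i ∈ Finset.range t,
          h.A (i + 1) * pnorm (dualExp p) (gradient f (h.x (i + 1))) ^ 2 ≤
      h.ψ t (h.v t) := by
  intro t
  induction t with
  | zero =>
    simp only [h.A_zero, h.ψ_zero, zero_mul, Finset.range_zero, Finset.sum_empty, mul_zero,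
      add_zero]
    positivity
  | succ t ih =>
    have := h.A_mul_sub_add_le_ψ_sub (by linarith) hL hconv hf hsmooth t
    rw [Finset.sum_range_succ, mul_add]
    linarith
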